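/- Let n, d ∈ ℕ with n ≥ 2 satisfy either d = 2, or (n,d) = (2,3). Then for every β ∈ (−∞, 2 − d/2) one has sup_{v ∈ ℤ^d} Σ_{l₁,…,l_n ∈ ℤ^d with l₁+⋯+l_n = v} (λ_v)^β / (λ_{l₁} ⋯ λ_{l_n}) < ∞; in particular each inner sum is finite. -/

import Mathlib

/-!
Since `λ_{a+b} ≤ 2 (λ_a + λ_b)`, the larger of `λ_a`, `λ_b` dominates `λ_{a+b} / 4`, so in a
convolution sum part of the decay of the larger factor can be traded for decay in the total
momentum: if `f ≤ C λ^{-q}` and `0 ≤ β ≤ r ≤ min 1 q`, then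
`∑_a λ_a⁻¹ f (v - a) ≤ C' λ_v^{-β}` as soon as `∑_x λ_x^{β - 2r} < ∞`, i.e. `2r - β > d/2`
(the latter by `λ_x^d ≥ ∏ᵢ (1 + xᵢ²)` and the one-dimensional `p`-series).

The inner sum of the theorem is `λ_v^β` times the `n`-fold convolution of `λ⁻¹`. For `d = 2`,
iterating the estimate with `r = (3 + β)/4` shows that each convolution power decays like
`λ^{-β}` for every `β < 1`; for `d = 3` a single convolution of `λ⁻¹` with itself decays like
`λ^{-β}` for every `β < 1/2`.
-/

open scoped ENNReal

/-- `λ_x = 1 + x₁² + ⋯ + x_d²` for a lattice point `x ∈ ℤ^d`. -/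
noncomputable def lam {d : ℕ} (x : Fin d → ℤ) : ℝ := 1 + ∑ i, ((x i : ℝ)) ^ 2

variable {d : ℕ}

lemma one_add_sq_le_lam (x : Fin d → ℤ) (i : Fin d) : 1 + (x i : ℝ) ^ 2 ≤ lam x := by
  have := Finset.single_le_sum (f := fun j => (x j : ℝ) ^ 2) (fun j _ => sq_nonneg _)
    (Finset.mem_univ i)
  unfold lam
  linarith

lemma one_le_lam (x : Fin d → ℤ) : 1 ≤ lam x := by
  unfold lam
  linarith [Finset.sum_nonneg fun i (_ : i ∈ Finset.univ) => sq_nonneg (x i : ℝ)]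

lemma lam_pos (x : Fin d → ℤ) : 0 < lam x := one_pos.trans_le (one_le_lam x)

lemma lam_add_le (x y : Fin d → ℤ) : lam (x + y) ≤ 2 * (lam x + lam y) := by
  have h : ∀ i, ((x + y) i : ℝ) ^ 2 ≤ 2 * (x i : ℝ) ^ 2 + 2 * (y i : ℝ) ^ 2 := fun i => by
    push_cast [Pi.add_apply]
    nlinarith [sq_nonneg ((x i : ℝ) - y i)]
  have := Finset.sum_le_sum fun i (_ : i ∈ Finset.univ) => h i
  simp only [Finset.sum_add_distrib, ← Finset.mul_sum] at this
  unfold lam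
  linarith

lemma prod_one_add_sq_le_lam_pow (x : Fin d → ℤ) : ∏ i, (1 + (x i : ℝ) ^ 2) ≤ lam x ^ d := by
  simpa using Finset.prod_le_prod (s := Finset.univ) (fun i _ => by positivity)
    fun i _ => one_add_sq_le_lam x i

lemma summable_one_add_sq_rpow_neg {t : ℝ} (ht : 1 / 2 < t) :
    Summable fun k : ℤ => (1 + (k : ℝ) ^ 2) ^ (-t) := by
  refine (Real.summable_abs_int_rpow (b := 2 * t) (by linarith)).of_norm_bounded_eventually ?_
  filter_upwards [Filter.eventually_cofinite_ne 0] with k hk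
  have hk : 0 < |(k : ℝ)| := by positivity
  calc ‖(1 + (k : ℝ) ^ 2) ^ (-t)‖ ≤ (|(k : ℝ)| ^ (2 : ℝ)) ^ (-t) := by
        rw [Real.norm_of_nonneg (by positivity), Real.rpow_two, sq_abs]
        exact Real.rpow_le_rpow_of_nonpos (by positivity) (by linarith) (by linarith)
    _ = |(k : ℝ)| ^ (-(2 * t)) := by rw [← Real.rpow_mul hk.le, mul_neg]

theorem ENNReal.tsum_fin_pi_prod {α : Type*} : ∀ {m : ℕ} (g : Fin m → α → ℝ≥0∞),
    ∑' f : Fin m → α, ∏ i, g i (f i) = ∏ i, ∑' a, g i a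
  | 0, g => by simp
  | m + 1, g => by
    rw [← (Fin.consEquiv fun _ => α).tsum_eq, ENNReal.tsum_prod', Fin.prod_univ_succ]
    simp only [Fin.consEquiv_apply, Fin.prod_univ_succ, Fin.cons_zero, Fin.cons_succ,
      ENNReal.tsum_mul_left, ENNReal.tsum_fin_pi_prod fun i => g i.succ, ENNReal.tsum_mul_right]

lemma tsum_ofReal_lam_rpow_neg_lt_top {s : ℝ} (hs : (d : ℝ) / 2 < s) :
    ∑' x : Fin d → ℤ, ENNReal.ofReal (lam x ^ (-s)) < ⊤ := by
  obtain rfl | hd := d.eq_zero_or_pos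
  · simp
  have hd : (0 : ℝ) < d := by exact_mod_cast hd
  have hsd : 1 / 2 < s / d := by rw [lt_div_iff₀ hd]; linarith
  have hpoint : ∀ x : Fin d → ℤ, lam x ^ (-s) ≤ ∏ i, (1 + (x i : ℝ) ^ 2) ^ (-(s / d)) := by
    intro x
    rw [Real.finsetProd_rpow _ _ fun i _ => by positivity]
    calc lam x ^ (-s) = (lam x ^ d) ^ (-(s / d)) := by
          rw [← Real.rpow_natCast, ← Real.rpow_mul (lam_pos x).le]
          field_simp
      _ ≤ _ := Real.rpow_le_rpow_of_nonpos (by positivity) (prod_one_add_sq_le_lam_pow x)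
          (by linarith)
  calc ∑' x : Fin d → ℤ, ENNReal.ofReal (lam x ^ (-s))
      ≤ ∑' x : Fin d → ℤ, ∏ i, ENNReal.ofReal ((1 + (x i : ℝ) ^ 2) ^ (-(s / d))) := by
        refine ENNReal.tsum_le_tsum fun x => ?_
        rw [← ENNReal.ofReal_prod_of_nonneg fun i _ => by positivity]
        exact ENNReal.ofReal_le_ofReal (hpoint x)
    _ = (∑' k : ℤ, ENNReal.ofReal ((1 + (k : ℝ) ^ 2) ^ (-(s / d)))) ^ d := by
        rw [ENNReal.tsum_fin_pi_prod
            fun _ (k : ℤ) => ENNReal.ofReal ((1 + (k : ℝ) ^ 2) ^ (-(s / d))), Finset.prod_const,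
          Finset.card_univ, Fintype.card_fin]
    _ < ⊤ := ENNReal.pow_lt_top (summable_one_add_sq_rpow_neg hsd).tsum_ofReal_lt_top

lemma rpow_neg_mul_rpow_neg_le {A B V r β : ℝ} (hA : 1 ≤ A) (hB : 1 ≤ B) (hV : 0 < V)
    (hVAB : V ≤ 2 * (A + B)) (hβ : 0 ≤ β) (hβr : β ≤ r) :
    A ^ (-r) * B ^ (-r) ≤ 4 ^ β * (A ^ (β - 2 * r) + B ^ (β - 2 * r)) * V ^ (-β) := by
  wlog hAB : A ≤ B generalizing A B
  · rw [mul_comm (A ^ _), add_comm (A ^ _)]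
    exact this hB hA (by linarith) (by linarith)
  have hA0 : 0 < A := by linarith
  have hB0 : 0 < B := by linarith
  have hBV : B ^ (-β) ≤ 4 ^ β * V ^ (-β) := by
    calc B ^ (-β) = 4 ^ β * (4 * B) ^ (-β) := by
          rw [Real.mul_rpow (by norm_num) hB0.le, Real.rpow_neg (by norm_num : (0 : ℝ) ≤ 4)]
          field_simp [(Real.rpow_pos_of_pos (by norm_num : (0 : ℝ) < 4) β).ne']
      _ ≤ 4 ^ β * V ^ (-β) := by
          have := Real.rpow_le_rpow_of_nonpos hV (by linarith : V ≤ 4 * B) (neg_nonpos.2 hβ)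
          gcongr
  calc A ^ (-r) * B ^ (-r) = A ^ (-r) * B ^ (β - r) * B ^ (-β) := by
        rw [mul_assoc, ← Real.rpow_add hB0]; ring_nf
    _ ≤ A ^ (-r) * A ^ (β - r) * (4 ^ β * V ^ (-β)) := by
        have := Real.rpow_le_rpow_of_nonpos hA0 hAB (by linarith : β - r ≤ 0)
        gcongr
    _ = 4 ^ β * A ^ (β - 2 * r) * V ^ (-β) := by
        rw [← Real.rpow_add hA0]; ring_nf
    _ ≤ 4 ^ β * (A ^ (β - 2 * r) + B ^ (β - 2 * r)) * V ^ (-β) := by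
        gcongr
        exact le_add_of_nonneg_right (by positivity)

lemma tsum_ofReal_lam_rpow_neg_mul_le {r β : ℝ} (hβ : 0 ≤ β) (hβr : β ≤ r) (v : Fin d → ℤ) :
    ∑' a, ENNReal.ofReal (lam a ^ (-r) * lam (v - a) ^ (-r)) ≤
      ENNReal.ofReal (4 ^ β) * (2 * ∑' x : Fin d → ℤ, ENNReal.ofReal (lam x ^ (β - 2 * r))) *
        ENNReal.ofReal (lam v ^ (-β)) := by
  have hpoint : ∀ a, lam a ^ (-r) * lam (v - a) ^ (-r) ≤
      4 ^ β * (lam a ^ (β - 2 * r) + lam (v - a) ^ (β - 2 * r)) * lam v ^ (-β) := fun a =>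
    rpow_neg_mul_rpow_neg_le (one_le_lam a) (one_le_lam (v - a)) (lam_pos v)
      (by simpa using lam_add_le a (v - a)) hβ hβr
  calc ∑' a, ENNReal.ofReal (lam a ^ (-r) * lam (v - a) ^ (-r))
      ≤ ∑' a, ENNReal.ofReal (4 ^ β) * (ENNReal.ofReal (lam a ^ (β - 2 * r)) +
          ENNReal.ofReal (lam (v - a) ^ (β - 2 * r))) * ENNReal.ofReal (lam v ^ (-β)) := by
        refine ENNReal.tsum_le_tsum fun a => (ENNReal.ofReal_le_ofReal (hpoint a)).trans_eq ?_
        have h0 (x : Fin d → ℤ) (s : ℝ) : 0 ≤ lam x ^ s := Real.rpow_nonneg (lam_pos x).le s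
        rw [ENNReal.ofReal_mul (mul_nonneg (by positivity) (add_nonneg (h0 _ _) (h0 _ _))),
          ENNReal.ofReal_mul (by positivity), ENNReal.ofReal_add (h0 _ _) (h0 _ _)]
    _ = _ := by
        have hshift : ∑' a, ENNReal.ofReal (lam (v - a) ^ (β - 2 * r)) =
            ∑' x, ENNReal.ofReal (lam x ^ (β - 2 * r)) :=
          (Equiv.subLeft v).tsum_eq fun x => ENNReal.ofReal (lam x ^ (β - 2 * r))
        rw [ENNReal.tsum_mul_right, ENNReal.tsum_mul_left, ENNReal.tsum_add, hshift, ← two_mul]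

def LamDecay (γ : ℝ) (f : (Fin d → ℤ) → ℝ≥0∞) : Prop :=
  ∃ C < ⊤, ∀ v, f v ≤ C * ENNReal.ofReal (lam v ^ (-γ))

namespace LamDecay

variable {f : (Fin d → ℤ) → ℝ≥0∞} {γ : ℝ}

lemma mono {γ' : ℝ} (hf : LamDecay γ f) (h : γ' ≤ γ) : LamDecay γ' f := by
  obtain ⟨C, hC, hfC⟩ := hf
  refine ⟨C, hC, fun v => (hfC v).trans (mul_le_mul_right (ENNReal.ofReal_le_ofReal ?_) C)⟩
  exact Real.rpow_le_rpow_of_exponent_le (one_le_lam v) (neg_le_neg h)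

lemma iSup_ofReal_rpow_mul_lt_top (hf : LamDecay γ f) :
    ⨆ v, ENNReal.ofReal (lam v ^ γ) * f v < ⊤ := by
  obtain ⟨C, hC, hfC⟩ := hf
  refine (iSup_le fun v => ?_).trans_lt hC
  calc ENNReal.ofReal (lam v ^ γ) * f v
      ≤ ENNReal.ofReal (lam v ^ γ) * (C * ENNReal.ofReal (lam v ^ (-γ))) := by gcongr; exact hfC v
    _ = C * ENNReal.ofReal (lam v ^ γ * lam v ^ (-γ)) := by
        rw [ENNReal.ofReal_mul (Real.rpow_nonneg (lam_pos v).le _)]; ring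
    _ = C := by rw [← Real.rpow_add (lam_pos v), add_neg_cancel, Real.rpow_zero,
        ENNReal.ofReal_one, mul_one]

lemma conv_inv_lam {q r β : ℝ} (hf : LamDecay q f) (hβ : 0 ≤ β) (hβr : β ≤ r) (hr : r ≤ 1)
    (hrq : r ≤ q) (hd : (d : ℝ) / 2 < 2 * r - β) :
    LamDecay β fun v => ∑' a, ENNReal.ofReal (lam a)⁻¹ * f (v - a) := by
  obtain ⟨C, hC, hfC⟩ := hf
  set Z := ∑' x : Fin d → ℤ, ENNReal.ofReal (lam x ^ (β - 2 * r))
  have hZ : Z < ⊤ := by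
    simpa only [neg_sub] using tsum_ofReal_lam_rpow_neg_lt_top hd
  refine ⟨C * (ENNReal.ofReal (4 ^ β) * (2 * Z)), by finiteness, fun v => ?_⟩
  have hpoint : ∀ a, (lam a)⁻¹ * lam (v - a) ^ (-q) ≤ lam a ^ (-r) * lam (v - a) ^ (-r) := by
    intro a
    rw [← Real.rpow_neg_one]
    exact mul_le_mul (Real.rpow_le_rpow_of_exponent_le (one_le_lam a) (by linarith))
      (Real.rpow_le_rpow_of_exponent_le (one_le_lam _) (by linarith))
      (Real.rpow_nonneg (lam_pos _).le _) (Real.rpow_nonneg (lam_pos _).le _)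
  calc ∑' a, ENNReal.ofReal (lam a)⁻¹ * f (v - a)
      ≤ ∑' a, ENNReal.ofReal (lam a)⁻¹ * (C * ENNReal.ofReal (lam (v - a) ^ (-q))) := by
        gcongr with a; exact hfC _
    _ = C * ∑' a, ENNReal.ofReal ((lam a)⁻¹ * lam (v - a) ^ (-q)) := by
        rw [← ENNReal.tsum_mul_left]
        refine tsum_congr fun a => ?_
        rw [ENNReal.ofReal_mul (inv_nonneg.2 (lam_pos a).le)]; ring
    _ ≤ C * ∑' a, ENNReal.ofReal (lam a ^ (-r) * lam (v - a) ^ (-r)) :=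
        mul_le_mul_right (ENNReal.tsum_le_tsum fun a => ENNReal.ofReal_le_ofReal (hpoint a)) C
    _ ≤ _ := by
        rw [mul_assoc C]
        gcongr
        exact tsum_ofReal_lam_rpow_neg_mul_le hβ hβr v

end LamDecay

def Fin.consSumEquiv {M : Type*} [AddCommGroup M] (n : ℕ) (v : M) :
    {l : Fin (n + 1) → M // ∑ j, l j = v} ≃ Σ a : M, {l : Fin n → M // ∑ j, l j = v - a} where
  toFun l := ⟨l.1 0, Fin.tail l.1, eq_sub_iff_add_eq'.2 ((Fin.sum_univ_succ l.1).symm.trans l.2)⟩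
  invFun p := ⟨Fin.cons p.1 p.2.1, by simp [Fin.sum_univ_succ, p.2.2]⟩
  left_inv l := Subtype.ext (Fin.cons_self_tail l.1)
  right_inv _ := rfl

noncomputable def wickConv (d n : ℕ) (v : Fin d → ℤ) : ℝ≥0∞ :=
  ∑' l : {l : Fin n → (Fin d → ℤ) // ∑ j, l j = v}, ENNReal.ofReal (∏ j, lam (l.1 j))⁻¹

lemma wickConv_one (v : Fin d → ℤ) : wickConv d 1 v = ENNReal.ofReal (lam v)⁻¹ := by
  rw [wickConv, tsum_eq_single ⟨fun _ => v, by simp⟩]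
  · simp
  · intro l hl
    refine absurd (Subtype.ext (funext fun j => ?_)) hl
    simpa [Fin.fin_one_eq_zero j] using l.2

lemma wickConv_succ (n : ℕ) (v : Fin d → ℤ) :
    wickConv d (n + 1) v = ∑' a, ENNReal.ofReal (lam a)⁻¹ * wickConv d n (v - a) := by
  rw [wickConv, ← (Fin.consSumEquiv n v).symm.tsum_eq, ENNReal.tsum_sigma']
  refine tsum_congr fun a => ?_
  rw [wickConv, ← ENNReal.tsum_mul_left]
  refine tsum_congr fun l => ?_
  rw [← ENNReal.ofReal_mul (inv_nonneg.2 (lam_pos a).le), ← mul_inv, Fin.prod_univ_succ]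
  rfl

lemma lamDecay_wickConv_one : LamDecay 1 (wickConv d 1) :=
  ⟨1, ENNReal.one_lt_top, fun v => by rw [wickConv_one, one_mul, Real.rpow_neg_one]⟩

lemma lamDecay_wickConv_two {n : ℕ} (hn : 1 ≤ n) {γ : ℝ} (hγ : γ < 1) :
    LamDecay γ (wickConv 2 n) := by
  induction n, hn using Nat.le_induction generalizing γ with
  | base => exact lamDecay_wickConv_one.mono hγ.le
  | succ n _ ih =>
    set β := max γ 0
    have hβ : β < 1 := max_lt hγ one_pos
    have hr : (3 + β) / 4 < 1 := by linarith
    refine LamDecay.mono ?_ (le_max_left γ 0)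
    rw [funext (wickConv_succ _)]
    exact (ih hr).conv_inv_lam (le_max_right γ 0) (by linarith) hr.le le_rfl
      (by push_cast; linarith)

lemma lamDecay_wickConv_three_two {γ : ℝ} (hγ : γ < 1 / 2) : LamDecay γ (wickConv 3 2) := by
  refine LamDecay.mono ?_ (le_max_left γ 0)
  rw [funext (wickConv_succ _)]
  exact lamDecay_wickConv_one.conv_inv_lam (le_max_right γ 0) (max_le (by linarith) zero_le_one)
    le_rfl le_rfl (by push_cast; linarith [max_lt hγ (by norm_num : (0 : ℝ) < 1 / 2)])

lemma tsum_ofReal_rpow_div_prod_lam {n : ℕ} (β : ℝ) (v : Fin d → ℤ) :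
    ∑' l : {l : Fin n → (Fin d → ℤ) // ∑ j, l j = v},
        ENNReal.ofReal (lam v ^ β / ∏ j, lam (l.1 j)) =
      ENNReal.ofReal (lam v ^ β) * wickConv d n v := by
  rw [wickConv, ← ENNReal.tsum_mul_left]
  refine tsum_congr fun l => ?_
  rw [div_eq_mul_inv, ENNReal.ofReal_mul (Real.rpow_nonneg (lam_pos v).le _)]

/-- Summability for Wick powers: if `n ≥ 2` and either `d = 2` or `(n,d) = (2,3)`,
then for every `β < 2 − d/2` each sum
`Σ_{l₁+⋯+l_n = v} (λ_v)^β/(λ_{l₁}⋯λ_{l_n})` is finite and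
the supremum over `v ∈ ℤ^d` of these sums is finite. -/
theorem wick_power_summability (n d : ℕ) (hn : 2 ≤ n)
    (hcase : d = 2 ∨ (n = 2 ∧ d = 3)) (β : ℝ) (hβ : β < 2 - (d : ℝ) / 2) :
    (∀ v : Fin d → ℤ,
      Summable (fun l : {l : Fin n → (Fin d → ℤ) // ∑ j, l j = v} =>
        (lam v) ^ β / ∏ j, lam (l.1 j)))
    ∧ (⨆ v : Fin d → ℤ,
        ∑' l : {l : Fin n → (Fin d → ℤ) // ∑ j, l j = v},
          ENNReal.ofReal ((lam v) ^ β / ∏ j, lam (l.1 j))) < ⊤ := by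
  have hdecay : LamDecay β (wickConv d n) := by
    rcases hcase with rfl | ⟨rfl, rfl⟩
    · exact lamDecay_wickConv_two (by omega) (by norm_num at hβ; linarith)
    · exact lamDecay_wickConv_three_two (by norm_num at hβ; linarith)
  have hsup := hdecay.iSup_ofReal_rpow_mul_lt_top
  simp_rw [tsum_ofReal_rpow_div_prod_lam]
  refine ⟨fun v => ?_, hsup⟩
  have hfin : ∑' l : {l : Fin n → (Fin d → ℤ) // ∑ j, l j = v},
      ENNReal.ofReal (lam v ^ β / ∏ j, lam (l.1 j)) ≠ ⊤ := by
    rw [tsum_ofReal_rpow_div_prod_lam]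
    exact ((le_iSup _ v).trans_lt hsup).ne
  refine (ENNReal.summable_toReal hfin).congr fun l => ENNReal.toReal_ofReal ?_
  exact div_nonneg (Real.rpow_nonneg (lam_pos v).le _)
    (Finset.prod_nonneg fun j _ => (lam_pos _).le)
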